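/- Let K be an infinite field, let α, β ∈ K be non-zero, and let A_1, A_2, A_3 ∈ M_3(K) satisfy: σ_k(A_i) = 0 for k, i = 1,2,3; tr(A_iA_j) = 0 for 1 ≤ i < j ≤ 3; tr(A_i²A_j) = 0 for all 1 ≤ i ≠ j ≤ 3; tr(A_i²A_j²) = 0 for 1 ≤ i < j ≤ 3; and α·tr(A_1A_2A_3) + β·tr(A_1A_3A_2) = 0. Then every invariant r ∈ R_{3,3} of positive degree (equivalently, every invariant with zero constant term) vanishes at the point (A_1, A_2, A_3). -/

import Mathlib

open Matrix MvPolynomial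

noncomputable section

/-- Evaluation of a coordinate-ring element at a `d`-tuple of `n × n` matrices. -/
def evalPt {K : Type} [Field K] {n d : ℕ} (A : Fin d → Matrix (Fin n) (Fin n) K) :
    MvPolynomial (Fin d × Fin n × Fin n) K →+* K :=
  MvPolynomial.eval fun p => A p.1 p.2.1 p.2.2

/-- The algebra of invariants `R_{n,d}` of `d`-tuples of `n × n` matrices under
simultaneous conjugation. -/
def invRing (K : Type) [Field K] (n d : ℕ) :
    Subalgebra K (MvPolynomial (Fin d × Fin n × Fin n) K) where
  carrier := {f | ∀ (g : GL (Fin n) K) (A : Fin d → Matrix (Fin n) (Fin n) K),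
      evalPt (fun r => (g : Matrix (Fin n) (Fin n) K) * A r *
        ((↑g⁻¹ : Matrix (Fin n) (Fin n) K))) f = evalPt A f}
  add_mem' := by intro a b ha hb g A; simp only [map_add, ha g A, hb g A]
  mul_mem' := by intro a b ha hb g A; simp only [_root_.map_mul, ha g A, hb g A]
  one_mem' := by intro g A; simp only [_root_.map_one]
  zero_mem' := by intro g A; simp only [map_zero]
  algebraMap_mem' := by intro r g A; simp [evalPt, MvPolynomial.algebraMap_eq]

/-- The generic `n × n` matrices `X_r`. -/
def genMat (K : Type) [Field K] (n d : ℕ) (r : Fin d) :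
    Matrix (Fin n) (Fin n) (MvPolynomial (Fin d × Fin n × Fin n) K) :=
  Matrix.of fun i j => MvPolynomial.X (r, i, j)

/-- The trace of a word in the generic matrices. -/
def trW (K : Type) [Field K] (n d : ℕ) (w : List (Fin d)) :
    MvPolynomial (Fin d × Fin n × Fin n) K :=
  Matrix.trace ((w.map (genMat K n d)).prod)

/-- `σ_k(M)`: the signed coefficients of the characteristic polynomial,
`det (λ E - M) = λ^n - σ_1(M) λ^{n-1} + ⋯ + (-1)^n σ_n(M)`. -/
def sigmaC {R : Type} [CommRing R] {n : ℕ} (k : ℕ) (M : Matrix (Fin n) (Fin n) R) : R :=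
  (-1) ^ k * (Matrix.charpoly M).coeff (n - k)

/-!
Each `A i` is nilpotent, its characteristic polynomial being `X ^ 3`. If some `A m ^ 2 ≠ 0`, then
in a Jordan basis of `A m` the trace conditions force every `A r` to be strictly upper triangular.
Otherwise every `A i = vecMulVec (u i) (v i)` has rank at most one, traces of products are products
of the numbers `v i ⬝ᵥ u j`, and the trace conditions (with `α, β ≠ 0`) make every product
`A i * A j * A k` vanish; then the `A i` strictly lower the filtration
`V ⊇ ∑ range (A i) ⊇ ∑ range (A i * A j) ⊇ 0`.
In both cases there are a basis and weights such that each `A r` maps every basis vector into the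
span of basis vectors of smaller weight. Conjugating by `diagonal (t⁻¹ ^ w ·)` then gives a tuple
depending polynomially on `t` and equal to `0` at `t = 0`. An invariant is constant along it for
`t ≠ 0`, hence (`K` being infinite) equal to its value at `0`, which is its constant term.
-/

open ConjAct

section Charpoly

variable {R : Type} [CommRing R] {n : ℕ}

theorem sigmaC_one [Nontrivial R] [NeZero n] (M : Matrix (Fin n) (Fin n) R) :
    sigmaC 1 M = M.trace := by
  simp [sigmaC, trace_eq_neg_charpoly_coeff]

theorem charpoly_eq_X_pow_of_sigmaC_eq_zero [Nontrivial R] (M : Matrix (Fin n) (Fin n) R)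
    (h : ∀ k, 1 ≤ k → k ≤ n → sigmaC k M = 0) : M.charpoly = Polynomial.X ^ n := by
  ext m
  rw [Polynomial.coeff_X_pow]
  rcases lt_trichotomy m n with hm | rfl | hm
  · have hk := h (n - m) (by omega) (by omega)
    rw [sigmaC, Nat.sub_sub_self hm.le] at hk
    simpa [hm.ne] using hk
  · simpa [M.charpoly_natDegree_eq_dim] using M.charpoly_monic.coeff_natDegree
  · rw [Polynomial.coeff_eq_zero_of_natDegree_lt (by simpa using hm), if_neg hm.ne']

theorem pow_eq_zero_of_charpoly_eq_X_pow {M : Matrix (Fin n) (Fin n) R}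
    (h : M.charpoly = Polynomial.X ^ n) : M ^ n = 0 := by
  simpa [h] using M.aeval_self_charpoly

end Charpoly

section

variable {K : Type} [Field K]

def LowersWeight {ι R : Type*} [Zero R] (w : ι → ℕ) (M : Matrix ι ι R) : Prop :=
  ∀ k l, M k l ≠ 0 → w k < w l

theorem evalPt_smul_of_mem_invRing {n d : ℕ} {f : MvPolynomial (Fin d × Fin n × Fin n) K}
    (hf : f ∈ invRing K n d) (g : GL (Fin n) K) (A : Fin d → Matrix (Fin n) (Fin n) K) :
    evalPt (fun r => toConjAct g • A r) f = evalPt A f :=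
  hf g A

theorem MvPolynomial.polynomial_eval_aeval {σ : Type*} (g : σ → Polynomial K)
    (f : MvPolynomial σ K) (t : K) :
    (aeval g f).eval t = eval (fun s => (g s).eval t) f := by
  rw [aeval_def, MvPolynomial.polynomial_eval_eval₂,
    show (Polynomial.evalRingHom t).comp (algebraMap K (Polynomial K)) = RingHom.id K by ext; simp]
  rfl

theorem evalPt_eq_zero_of_lowersWeight [Infinite K] {n d : ℕ}
    {f : MvPolynomial (Fin d × Fin n × Fin n) K} (hf : f ∈ invRing K n d) (hf0 : coeff 0 f = 0)
    (M : Fin d → Matrix (Fin n) (Fin n) K) (w : Fin n → ℕ) (hM : ∀ r, LowersWeight w (M r)) :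
    evalPt M f = 0 := by
  -- `w l - w k` truncates, harmlessly: `M r k l = 0` unless `w k < w l`.
  set P : Polynomial K := aeval (fun p : Fin d × Fin n × Fin n =>
    Polynomial.C (M p.1 p.2.1 p.2.2) * Polynomial.X ^ (w p.2.2 - w p.2.1)) f
  have hP : ∀ t, P.eval t = evalPt (fun r => of fun k l => M r k l * t ^ (w l - w k)) f := by
    intro t
    simp [P, evalPt, polynomial_eval_aeval]
  have hP0 : P.eval 0 = 0 := by
    have : (fun r => of fun k l => M r k l * (0 : K) ^ (w l - w k)) = 0 := by
      ext r k l
      by_cases h : M r k l = 0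
      · simp [h]
      · simp [Nat.sub_ne_zero_of_lt (hM r k l h)]
    rw [hP, this]
    simpa [evalPt, MvPolynomial.eval_zero', constantCoeff_eq] using hf0
  have hPt : ∀ t : K, t ≠ 0 → P.eval t = evalPt M f := by
    intro t ht
    let D : GL (Fin n) K := ⟨diagonal fun k => t⁻¹ ^ w k, diagonal fun k => t ^ w k,
      by simp [ht], by simp [ht]⟩
    rw [hP, ← evalPt_smul_of_mem_invRing hf D M]
    congr
    ext r k l
    simp only [ConjAct.units_smul_def, ConjAct.ofConjAct_toConjAct, D]
    by_cases h : M r k l = 0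
    · simp [h]
    · simp [pow_sub₀ t ht (hM r k l h).le, inv_pow]
      ring
  have hPC : P = Polynomial.C (evalPt M f) := by
    refine Polynomial.eq_of_infinite_eval_eq _ _ ((Set.finite_singleton 0).infinite_compl.mono ?_)
    intro t ht
    simpa using hPt t ht
  simpa [hPC] using hP0

theorem exists_conj_apply_eq_repr {n : ℕ} (b : Module.Basis (Fin n) K (Fin n → K)) :
    ∃ g : GL (Fin n) K, ∀ M k l, (toConjAct g • M) k l = b.repr (M *ᵥ b l) k := by
  let := b.invertibleToMatrix (Pi.basisFun K (Fin n))
  refine ⟨unitOfInvertible (b.toMatrix (Pi.basisFun K (Fin n))), fun M k l => ?_⟩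
  change (b.toMatrix (Pi.basisFun K (Fin n)) * M * (Pi.basisFun K (Fin n)).toMatrix b) k l = _
  rw [Matrix.mul_assoc, basis_toMatrix_basisFun_mul]
  congr 2

theorem trace_toConjAct_smul {ι R : Type*} [Fintype ι] [DecidableEq ι] [CommRing R]
    (g : (Matrix ι ι R)ˣ) (M : Matrix ι ι R) : trace (toConjAct g • M) = trace M :=
  trace_units_conj g M

theorem exists_basis_of_filtration {V ι : Type*} [AddCommGroup V] [Module K V]
    (A : ι → Module.End K V) (W₁ W₂ : Submodule K V) (hW₂₁ : W₂ ≤ W₁) (hV : ∀ r x, A r x ∈ W₁)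
    (hW₁ : ∀ r, ∀ x ∈ W₁, A r x ∈ W₂) (hW₂ : ∀ r, ∀ x ∈ W₂, A r x = 0) :
    ∃ (s : Set V) (b : Module.Basis s K V) (w : s → ℕ),
      ∀ r l, A r (b l) ∈ Submodule.span K (b '' {k | w k < w l}) := by
  classical
  obtain ⟨s₂, hs₂W, -, hW₂s₂, hs₂⟩ :=
    exists_linearIndepOn_id_extension (linearIndepOn_empty K id) (Set.empty_subset (W₂ : Set V))
  obtain ⟨s₁, hs₁W, hs₂s₁, hW₁s₁, hs₁⟩ :=
    exists_linearIndepOn_id_extension hs₂ (hs₂W.trans hW₂₁)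
  obtain ⟨s, -, hs₁s, hVs, hs⟩ := exists_linearIndepOn_id_extension hs₁ (Set.subset_univ _)
  let b := Module.Basis.mk hs (by simpa using hVs)
  have hb : ∀ k, b k = k := Module.Basis.mk_apply _ _
  let w : V → ℕ := fun x => if x ∈ W₂ then 0 else if x ∈ W₁ then 1 else 2
  refine ⟨s, b, fun k => w k, fun r l => ?_⟩
  have hspan : ∀ t ⊆ s, (∀ x ∈ t, w x < w l) →
      Submodule.span K t ≤ Submodule.span K (b '' {k | w k < w l}) :=
    fun t hts htw => Submodule.span_mono fun x hx => ⟨⟨x, hts hx⟩, htw x hx, hb _⟩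
  rw [hb]
  by_cases hl₂ : (l : V) ∈ W₂
  · simp [hW₂ r l hl₂]
  by_cases hl₁ : (l : V) ∈ W₁
  · refine hspan s₂ (hs₂s₁.trans hs₁s) (fun x hx => ?_) (hW₂s₂ (hW₁ r l hl₁))
    simp [w, show x ∈ W₂ from hs₂W hx, hl₁, hl₂]
  · refine hspan s₁ hs₁s (fun x hx => ?_) (hW₁s₁ (hV r l))
    simp only [w, hl₁, hl₂, show x ∈ W₁ from hs₁W hx, if_false, if_true]
    split_ifs <;> simp

theorem exists_basis_of_mul_mul_eq_zero {V ι : Type*} [AddCommGroup V] [Module K V]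
    (A : ι → Module.End K V) (h : ∀ i j k, A i * A j * A k = 0) :
    ∃ (s : Set V) (b : Module.Basis s K V) (w : s → ℕ),
      ∀ r l, A r (b l) ∈ Submodule.span K (b '' {k | w k < w l}) := by
  have hV : ∀ r x, A r x ∈ ⨆ i, LinearMap.range (A i) := fun r x =>
    Submodule.mem_iSup_of_mem r (LinearMap.mem_range_self _ x)
  refine exists_basis_of_filtration A _ (⨆ p : ι × ι, LinearMap.range (A p.1 * A p.2))
    (iSup_le fun p => ?_) hV (fun r x hx => ?_) (fun r x hx => ?_)
  · rintro _ ⟨z, rfl⟩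
    exact hV p.1 (A p.2 z)
  · induction hx using Submodule.iSup_induction' with
    | mem i y hy =>
      obtain ⟨z, rfl⟩ := hy
      exact Submodule.mem_iSup_of_mem (r, i) (LinearMap.mem_range_self _ z)
    | zero => simp
    | add y z _ _ hy hz => rw [map_add]; exact add_mem hy hz
  · induction hx using Submodule.iSup_induction' with
    | mem p y hy =>
      obtain ⟨z, rfl⟩ := hy
      simpa using LinearMap.congr_fun (h r p.1 p.2) z
    | zero => simp
    | add y z _ _ hy hz => rw [map_add, hy, hz, add_zero]

theorem exists_GL_lowersWeight_of_mul_mul_eq_zero {n : ℕ} {ι : Type*}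
    (A : ι → Matrix (Fin n) (Fin n) K) (h : ∀ i j k, A i * A j * A k = 0) :
    ∃ (g : GL (Fin n) K) (w : Fin n → ℕ), ∀ r, LowersWeight w (toConjAct g • A r) := by
  obtain ⟨s, b, w, hb⟩ := exists_basis_of_mul_mul_eq_zero (fun r => toLinAlgEquiv' (A r))
    fun i j k => by simp only [← map_mul, h, map_zero]
  let e := b.indexEquiv (Pi.basisFun K (Fin n))
  obtain ⟨g, hg⟩ := exists_conj_apply_eq_repr (b.reindex e)
  refine ⟨g, w ∘ e.symm, fun r k l hkl => ?_⟩
  rw [hg] at hkl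
  simp only [Module.Basis.repr_reindex, Module.Basis.reindex_apply,
    Finsupp.mapDomain_equiv_apply] at hkl
  exact b.repr_support_subset_of_mem_span _ (hb r (e.symm l)) (Finsupp.mem_support_iff.mpr hkl)

theorem linearIndependent_iterate_three {V : Type*} [AddCommGroup V] [Module K V]
    (f : Module.End K V) (x : V) (hx : f (f x) ≠ 0) (hf : f (f (f x)) = 0) :
    LinearIndependent K ![f (f x), f x, x] := by
  rw [Fintype.linearIndependent_iff]
  intro c hc
  simp only [Fin.sum_univ_three, Matrix.cons_val_zero, Matrix.cons_val_one, Matrix.cons_val_two,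
    Matrix.head_cons, Matrix.tail_cons] at hc
  have h2 : c 2 = 0 := by
    have := congrArg (fun y => f (f y)) hc
    simp only [map_add, map_smul, hf, map_zero, smul_zero, zero_add] at this
    exact (smul_eq_zero.mp this).resolve_right hx
  have h1 : c 1 = 0 := by
    have := congrArg f hc
    simp only [map_add, map_smul, hf, h2, map_zero, smul_zero, zero_smul, zero_add,
      add_zero] at this
    exact (smul_eq_zero.mp this).resolve_right hx
  have h0 : c 0 = 0 := by
    simp only [h1, h2, zero_smul, add_zero] at hc
    exact (smul_eq_zero.mp hc).resolve_right hx
  intro i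
  fin_cases i <;> assumption

def jordanBlock3 (K : Type) [Field K] : Matrix (Fin 3) (Fin 3) K := !![0, 1, 0; 0, 0, 1; 0, 0, 0]

theorem exists_GL_smul_eq_jordanBlock3 (A : Matrix (Fin 3) (Fin 3) K) (h2 : A ^ 2 ≠ 0)
    (h3 : A ^ 3 = 0) : ∃ g : GL (Fin 3) K, toConjAct g • A = jordanBlock3 K := by
  obtain ⟨x, hx⟩ : ∃ x, A *ᵥ (A *ᵥ x) ≠ 0 := by
    by_contra! hx
    exact h2 (ext_iff_mulVec.mpr fun x => by simpa [sq, mulVec_mulVec] using hx x)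
  have hx3 : A *ᵥ (A *ᵥ (A *ᵥ x)) = 0 := by
    rw [mulVec_mulVec, mulVec_mulVec, ← pow_three', h3, zero_mulVec]
  let b := basisOfLinearIndependentOfCardEqFinrank
    (linearIndependent_iterate_three (toLin' A) x hx hx3) (by simp)
  have hb : ∀ l, A *ᵥ b l = ![0, b 0, b 1] l := by
    intro l
    fin_cases l <;> simp [b, hx3, -mulVec_mulVec]
  obtain ⟨g, hg⟩ := exists_conj_apply_eq_repr b
  refine ⟨g, ?_⟩
  ext k l
  rw [hg, hb]
  fin_cases k <;> fin_cases l <;> simp [jordanBlock3]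

theorem trace_jordanBlock3_mul (M : Matrix (Fin 3) (Fin 3) K) :
    trace (jordanBlock3 K * M) = M 1 0 + M 2 1 := by
  simp [jordanBlock3, trace_fin_three, vecMul, dotProduct, Fin.sum_univ_three]

theorem trace_jordanBlock3_sq_mul (M : Matrix (Fin 3) (Fin 3) K) :
    trace (jordanBlock3 K ^ 2 * M) = M 2 0 := by
  simp [jordanBlock3, trace_fin_three, sq, vecMul, dotProduct, Fin.sum_univ_three]

theorem lowersWeight_of_trace_jordanBlock3 (N : Matrix (Fin 3) (Fin 3) K) (h3 : N ^ 3 = 0)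
    (h1 : trace (jordanBlock3 K * N) = 0) (h2 : trace (jordanBlock3 K ^ 2 * N) = 0)
    (h22 : trace (jordanBlock3 K ^ 2 * N ^ 2) = 0) : LowersWeight Fin.val N := by
  rw [trace_jordanBlock3_mul] at h1
  rw [trace_jordanBlock3_sq_mul] at h2 h22
  simp only [sq, mul_apply, Fin.sum_univ_three, h2] at h22
  have h10 : N 1 0 = 0 := by
    apply pow_eq_zero_iff two_ne_zero |>.mp
    linear_combination N 1 0 * h1 - h22
  have h21 : N 2 1 = 0 := by linear_combination h1 - h10
  have hdiag : ∀ i, N i i = 0 := by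
    intro i
    have := congrFun (congrFun h3 i) i
    apply pow_eq_zero_iff three_ne_zero |>.mp
    fin_cases i <;> simp [pow_three, mul_apply, Fin.sum_univ_three, h10, h21, h2] at this ⊢ <;>
      linear_combination this
  intro k l hkl
  by_contra hlt
  fin_cases k <;> fin_cases l <;> simp_all

theorem exists_GL_lowersWeight_of_sq_ne_zero {ι : Type*} (A : ι → Matrix (Fin 3) (Fin 3) K)
    (m : ι) (hm : A m ^ 2 ≠ 0) (hnil : ∀ r, A r ^ 3 = 0)
    (h1 : ∀ r, r ≠ m → trace (A m * A r) = 0) (h2 : ∀ r, r ≠ m → trace (A m ^ 2 * A r) = 0)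
    (h22 : ∀ r, r ≠ m → trace (A m ^ 2 * A r ^ 2) = 0) :
    ∃ (g : GL (Fin 3) K) (w : Fin 3 → ℕ), ∀ r, LowersWeight w (toConjAct g • A r) := by
  obtain ⟨g, hg⟩ := exists_GL_smul_eq_jordanBlock3 (A m) hm (hnil m)
  refine ⟨g, Fin.val, fun r => ?_⟩
  rcases eq_or_ne r m with rfl | hr
  · rw [hg]
    intro k l
    fin_cases k <;> fin_cases l <;> simp [jordanBlock3]
  apply lowersWeight_of_trace_jordanBlock3
  · rw [← smul_pow', hnil r, smul_zero]
  · rw [← hg, ← smul_mul', trace_toConjAct_smul, h1 r hr]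
  · rw [← hg, ← smul_pow', ← smul_mul', trace_toConjAct_smul, h2 r hr]
  · rw [← hg, ← smul_pow', ← smul_pow', ← smul_mul', trace_toConjAct_smul, h22 r hr]

theorem exists_eq_vecMulVec_of_rank_le_one {m n : Type*} [Fintype m] [Fintype n] [DecidableEq n]
    (M : Matrix m n K) (h : M.rank ≤ 1) : ∃ u v, M = vecMulVec u v := by
  obtain ⟨u, hu⟩ := finrank_le_one_iff.mp h
  choose c hc using fun j => hu ⟨M *ᵥ Pi.single j 1, Pi.single j 1, rfl⟩
  refine ⟨u, c, ext fun i j => ?_⟩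
  have := congrFun (congrArg Subtype.val (hc j)) i
  simp only [Submodule.coe_smul, Pi.smul_apply, smul_eq_mul, mulVec_single_one, col_apply] at this
  rw [vecMulVec_apply, ← this, mul_comm]

theorem rank_le_one_of_mul_self_eq_zero {M : Matrix (Fin 3) (Fin 3) K} (h : M * M = 0) :
    M.rank ≤ 1 := by
  have := rank_add_rank_le_card_of_mul_eq_zero h
  simp only [Fintype.card_fin] at this
  omega

theorem linearIndependent_of_dual {V : Type*} [AddCommGroup V] [Module K V] {a b c : V}
    {p q : V →ₗ[K] K} (ha : a ≠ 0) (hpa : p a = 0) (hpb : p b ≠ 0) (hqa : q a = 0) (hqb : q b = 0)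
    (hqc : q c ≠ 0) : LinearIndependent K ![a, b, c] := by
  rw [Fintype.linearIndependent_iff]
  intro s hs
  simp only [Fin.sum_univ_three, Matrix.cons_val_zero, Matrix.cons_val_one, Matrix.cons_val_two,
    Matrix.head_cons, Matrix.tail_cons] at hs
  have h2 : s 2 = 0 := by
    have := congrArg q hs
    simp only [map_add, map_smul, hqa, hqb, smul_eq_mul, mul_zero, zero_add, map_zero] at this
    exact (mul_eq_zero.mp this).resolve_right hqc
  have h1 : s 1 = 0 := by
    have := congrArg p hs
    simp only [map_add, map_smul, hpa, h2, smul_eq_mul, mul_zero, zero_add, zero_mul, add_zero,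
      map_zero] at this
    exact (mul_eq_zero.mp this).resolve_right hpb
  have h0 : s 0 = 0 := by
    simp only [h1, h2, zero_smul, add_zero] at hs
    exact (smul_eq_zero.mp hs).resolve_right ha
  intro i
  fin_cases i <;> assumption

theorem eq_zero_of_dotProduct_eq_zero {n : Type*} [Fintype n] [DecidableEq n] {u : n → n → K}
    (hu : LinearIndependent K u) {v : n → K} (hv : ∀ i, u i ⬝ᵥ v = 0) : v = 0 := by
  apply mulVec_injective_iff_isUnit.mpr (linearIndependent_rows_iff_isUnit.mp hu)
  ext i
  simpa [mulVec] using hv i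

theorem eq_zero_or_eq_zero_of_dotProduct {a b c p q r : Fin 3 → K} (hpa : p ⬝ᵥ a = 0)
    (hpb : p ⬝ᵥ b ≠ 0) (hqa : q ⬝ᵥ a = 0) (hqb : q ⬝ᵥ b = 0) (hqc : q ⬝ᵥ c ≠ 0)
    (hra : r ⬝ᵥ a = 0) (hrb : r ⬝ᵥ b = 0) (hrc : r ⬝ᵥ c = 0) : a = 0 ∨ r = 0 := by
  refine or_iff_not_imp_left.mpr fun ha => ?_
  have hli : LinearIndependent K ![a, b, c] :=
    linearIndependent_of_dual (p := dotProductBilin K K p) (q := dotProductBilin K K q) ha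
      (by simpa) (by simpa) (by simpa) (by simpa) (by simpa)
  refine eq_zero_of_dotProduct_eq_zero hli fun m => ?_
  rw [dotProduct_comm]
  fin_cases m <;> simpa

theorem cyclic_products_eq_zero (α β : K) (hα : α ≠ 0) (hβ : β ≠ 0) (x : Fin 3 → Fin 3 → K)
    (hd : ∀ i, x i i = 0) (hp : ∀ i j, x i j * x j i = 0)
    (hcomb : α * (x 0 1 * x 1 2 * x 2 0) + β * (x 0 2 * x 2 1 * x 1 0) = 0) :
    ∀ i j k, x i j * x j k * x k i = 0 := by
  have hprod : (x 0 1 * x 1 2 * x 2 0) * (x 0 2 * x 2 1 * x 1 0) = 0 := by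
    linear_combination (x 1 2 * x 2 0 * x 0 2 * x 2 1) * hp 0 1
  have h012 : x 0 1 * x 1 2 * x 2 0 = 0 := by
    refine pow_eq_zero_iff two_ne_zero |>.mp ((mul_eq_zero.mp ?_).resolve_left hα)
    linear_combination (x 0 1 * x 1 2 * x 2 0) * hcomb - β * hprod
  have h021 : x 0 2 * x 2 1 * x 1 0 = 0 := by
    refine pow_eq_zero_iff two_ne_zero |>.mp ((mul_eq_zero.mp ?_).resolve_left hβ)
    linear_combination (x 0 2 * x 2 1 * x 1 0) * hcomb - α * hprod
  intro i j k
  fin_cases i <;> fin_cases j <;> fin_cases k <;>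
    simp only [Fin.zero_eta, Fin.mk_one, Fin.reduceFinMk, hd, mul_zero, zero_mul] <;>
    first | linear_combination h012 | linear_combination h021

theorem mul_mul_eq_zero_of_mul_self_eq_zero (α β : K) (hα : α ≠ 0) (hβ : β ≠ 0)
    (A : Fin 3 → Matrix (Fin 3) (Fin 3) K) (hsq : ∀ i, A i * A i = 0)
    (htr1 : ∀ i, trace (A i) = 0) (htr2 : ∀ i j, i ≠ j → trace (A i * A j) = 0)
    (hcomb : α * trace (A 0 * A 1 * A 2) + β * trace (A 0 * A 2 * A 1) = 0) :
    ∀ i j k, A i * A j * A k = 0 := by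
  choose u v hA using fun i =>
    exists_eq_vecMulVec_of_rank_le_one (A i) (rank_le_one_of_mul_self_eq_zero (hsq i))
  obtain ⟨x, hx⟩ : ∃ x : Fin 3 → Fin 3 → K, ∀ i j, v i ⬝ᵥ u j = x i j := ⟨_, fun _ _ => rfl⟩
  have hmul2 : ∀ i j, A i * A j = vecMulVec (u i) (x i j • v j) := by
    intro i j
    rw [hA, hA, vecMulVec_mul_vecMulVec, hx]
  have hmul3 : ∀ i j k, A i * A j * A k = vecMulVec (u i) ((x i j * x j k) • v k) := by
    intro i j k
    rw [hmul2, hA, vecMulVec_mul_vecMulVec, smul_dotProduct, hx, smul_eq_mul]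
  have hd : ∀ i, x i i = 0 := fun i => by
    rw [← hx, dotProduct_comm, ← trace_vecMulVec, ← hA, htr1]
  have hp : ∀ i j, x i j * x j i = 0 := by
    intro i j
    rcases eq_or_ne i j with rfl | hij
    · simp [hd]
    · rw [← htr2 i j hij, hmul2, trace_vecMulVec, dotProduct_smul, dotProduct_comm, hx,
        smul_eq_mul]
  have htr3 : ∀ i j k, trace (A i * A j * A k) = x i j * x j k * x k i := by
    intro i j k
    rw [hmul3, trace_vecMulVec, dotProduct_smul, dotProduct_comm, hx, smul_eq_mul]
  have hcyc := cyclic_products_eq_zero α β hα hβ x hd hp (by rwa [htr3, htr3] at hcomb)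
  intro i j k
  rw [hmul3]
  by_cases hc : x i j * x j k = 0
  · simp [hc]
  obtain ⟨hij, hjk⟩ := mul_ne_zero_iff.mp hc
  have hji : x j i = 0 := (mul_eq_zero.mp (hp i j)).resolve_left hij
  have hkj : x k j = 0 := (mul_eq_zero.mp (hp j k)).resolve_left hjk
  have hki : x k i = 0 := (mul_eq_zero.mp (hcyc i j k)).resolve_left hc
  rcases eq_zero_or_eq_zero_of_dotProduct (p := v i) (q := v j) (r := v k) (a := u i) (b := u j)
    (c := u k) (by rw [hx, hd]) (by rwa [hx]) (by rwa [hx]) (by rw [hx, hd]) (by rwa [hx])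
    (by rwa [hx]) (by rwa [hx]) (by rw [hx, hd]) with h | h <;> simp [h]

end

/-- Vanishing lemma for triples of `3 × 3` matrices (Lemma 4 of the paper). -/
theorem vanishing_lemma_R33 (K : Type) [Field K] [Infinite K] (α β : K)
    (hα : α ≠ 0) (hβ : β ≠ 0) (A : Fin 3 → Matrix (Fin 3) (Fin 3) K)
    (hσ : ∀ (i : Fin 3) (k : ℕ), 1 ≤ k → k ≤ 3 → sigmaC k (A i) = 0)
    (htr : ∀ i j : Fin 3, i < j → Matrix.trace (A i * A j) = 0)
    (hsq : ∀ i j : Fin 3, i ≠ j → Matrix.trace (A i ^ 2 * A j) = 0)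
    (hsq2 : ∀ i j : Fin 3, i < j → Matrix.trace (A i ^ 2 * A j ^ 2) = 0)
    (hcomb : α * Matrix.trace (A 0 * A 1 * A 2) + β * Matrix.trace (A 0 * A 2 * A 1) = 0) :
    ∀ f ∈ invRing K 3 3, MvPolynomial.coeff 0 f = 0 → evalPt A f = 0 := by
  intro f hf hf0
  have hnil : ∀ i, A i ^ 3 = 0 := fun i =>
    pow_eq_zero_of_charpoly_eq_X_pow (charpoly_eq_X_pow_of_sigmaC_eq_zero (A i) (hσ i))
  have htr1 : ∀ i, trace (A i) = 0 := fun i => by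
    rw [← sigmaC_one]
    exact hσ i 1 le_rfl (by norm_num)
  have htr' : ∀ i j, i ≠ j → trace (A i * A j) = 0 := fun i j hij =>
    hij.lt_or_gt.elim (htr i j) fun h => by rw [trace_mul_comm]; exact htr j i h
  have hsq2' : ∀ i j, i ≠ j → trace (A i ^ 2 * A j ^ 2) = 0 := fun i j hij =>
    hij.lt_or_gt.elim (hsq2 i j) fun h => by rw [trace_mul_comm]; exact hsq2 j i h
  obtain ⟨g, w, hw⟩ : ∃ (g : GL (Fin 3) K) (w : Fin 3 → ℕ),
      ∀ r, LowersWeight w (toConjAct g • A r) := by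
    by_cases h : ∃ m, A m ^ 2 ≠ 0
    · obtain ⟨m, hm⟩ := h
      exact exists_GL_lowersWeight_of_sq_ne_zero A m hm hnil (fun r hr => htr' m r hr.symm)
        (fun r hr => hsq m r hr.symm) (fun r hr => hsq2' m r hr.symm)
    · push Not at h
      exact exists_GL_lowersWeight_of_mul_mul_eq_zero A <|
        mul_mul_eq_zero_of_mul_self_eq_zero α β hα hβ A (fun i => by rw [← sq, h i]) htr1 htr' hcomb
  rw [← evalPt_smul_of_mem_invRing hf g A]
  exact evalPt_eq_zero_of_lowersWeight hf hf0 _ w hw
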